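/- arXiv:2402.17143 — 2 statements merged into one kernel-verified Lean document; each statement's English description precedes it below -/
import Mathlib

section
/- Let F be a monotone subadditive quality cost with integer exponent α ≥ 1, let the predicted instance Ĵ be nonempty with 0 < OPT(Ĵ) < ∞, let 𝒥 be the true instance, let OfflineAlg be an optimal offline algorithm (γ_off = 1) and OnlineAlg be γ_on-competitive, and let λ ∈ (0,1). If η₁ = η₂ = 0 (the predictions are exactly correct), then the schedule S output by TPE with confidence parameter λ satisfies cost(S, 𝒥) ≤ (1 + γ_on·2^α·λ^{1/α})·OPT(𝒥). -/
/-!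
Gluing a schedule of cost `a` for a job set `A` with a schedule of cost `b` for a disjoint set `B`
costs at most `(a^{1/α} + b^{1/α})^α`: Minkowski's inequality bounds the energy and
subadditivity the quality cost. Hence adding jobs of optimal cost `0` does not change `OPT`, and
exact predictions give `OPT(𝒥) = OPT(Ĵ)`. With an optimal offline algorithm TPE must then switch,
because `OFF(𝒥) ≥ OPT(𝒥) = OFF(Ĵ) > λ·OFF(Ĵ)`. After the switch at `t_λ`, the offline part costs
at most `OPT(Ĵ_{≥t_λ}) ≤ OPT(𝒥)`; the other jobs are, up to jobs of optimal cost `0`, those of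
`𝒥_{<t_λ}`, whose optimum is at most `λ·OPT(𝒥)` by minimality of `t_λ`, so the online part costs
at most `γ_on·λ·OPT(𝒥)`. Gluing gives `(1 + (γ_on λ)^{1/α})^α · OPT(𝒥)`, and
`(1 + z)^α ≤ 1 + 2^α z` for `z ≤ 1`, `(1 + z)^α ≤ 2^α z^α` for `z ≥ 1` together with `γ_on ≥ 1`
give the claimed factor.
-/

open MeasureTheory Finset
open scoped ENNReal BigOperators Classical

/-- A job: identifier, release time, processing time, weight. -/
structure Job where
  id : ℕ
  r : ℝ
  p : ℝ
  v : ℝ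

noncomputable instance : DecidableEq Job := Classical.decEq _

/-- An instance is valid when release times are nonnegative and processing
times and weights are positive. -/
def ValidInstance (J : Finset Job) : Prop :=
  ∀ j ∈ J, 0 ≤ j.r ∧ 0 < j.p ∧ 0 < j.v

/-- A schedule: speed functions for jobs. -/
abbrev Sched := Job → ℝ → ℝ

/-- `S` is a feasible schedule for the instance `J`. -/
def Feasible (J : Finset Job) (S : Sched) : Prop :=
  ∀ j ∈ J, Measurable (S j) ∧ (∀ t, 0 ≤ S j t) ∧ (∀ t, t < j.r → S j t = 0) ∧
    (∫ t in Set.Ici j.r, S j t) = j.p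

/-- Work profile of job `j` under schedule `S`: remaining work at time `t`. -/
noncomputable def work (S : Sched) (j : Job) (t : ℝ) : ℝ :=
  j.p - ∫ u in Set.Icc j.r t, S j u

/-- Energy consumption of schedule `S` on instance `J`, with exponent `α`. -/
noncomputable def energy (α : ℕ) (J : Finset Job) (S : Sched) : ℝ≥0∞ :=
  ∫⁻ t in Set.Ioi (0 : ℝ), ENNReal.ofReal ((∑ j ∈ J, S j t) ^ α)

/-- A quality cost function: depends only on the work profiles (and job
parameters), is subadditive, monotone in the work profiles, and monotone
under job-set inclusion. -/
structure QualityCost where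
  F : Sched → Finset Job → ℝ≥0∞
  profile_congr : ∀ S S' J, (∀ j ∈ J, ∀ t, work S j t = work S' j t) → F S J = F S' J
  subadd : ∀ S J₁ J₂, Disjoint J₁ J₂ → F S (J₁ ∪ J₂) ≤ F S J₁ + F S J₂
  mono_work : ∀ S S' J, (∀ j ∈ J, ∀ t, j.r ≤ t → work S j t ≤ work S' j t) → F S J ≤ F S' J
  mono_subset : ∀ S J' J, J' ⊆ J → F S J' ≤ F S J

/-- Total cost of a schedule: energy plus quality cost. -/
noncomputable def cost (Q : QualityCost) (α : ℕ) (S : Sched) (J : Finset Job) : ℝ≥0∞ :=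
  energy α J S + Q.F S J

/-- Optimal (offline) cost of an instance. -/
noncomputable def OPT (Q : QualityCost) (α : ℕ) (J : Finset Job) : ℝ≥0∞ :=
  ⨅ (S : Sched) (_ : Feasible J S), cost Q α S J

/-- Jobs of `J` released at or before time `t`. -/
noncomputable def restrictLE (J : Finset Job) (t : ℝ) : Finset Job :=
  J.filter fun j => j.r ≤ t

/-- Jobs of `J` released at or after time `t`. -/
noncomputable def restrictGE (J : Finset Job) (t : ℝ) : Finset Job :=
  J.filter fun j => t ≤ j.r

/-- `A` is a `γ`-competitive offline algorithm: on every instance it returns a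
feasible schedule whose cost is between the optimum and `γ` times the optimum. -/
def OfflineCompetitive (Q : QualityCost) (α : ℕ) (γ : ℝ≥0∞) (A : Finset Job → Sched) : Prop :=
  ∀ K : Finset Job, ValidInstance K →
    Feasible K (A K) ∧ OPT Q α K ≤ cost Q α (A K) K ∧ cost Q α (A K) K ≤ γ * OPT Q α K

/-- `A` is a `γ`-competitive online algorithm: on every instance it returns a
feasible schedule of cost at most `γ` times the optimum. -/
def OnlineCompetitive (Q : QualityCost) (α : ℕ) (γ : ℝ≥0∞) (A : Finset Job → Sched) : Prop :=
  ∀ K : Finset Job, ValidInstance K →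
    Feasible K (A K) ∧ cost Q α (A K) K ≤ γ * OPT Q α K

/-- Cost `OFF(K)` achieved by the offline algorithm `Off` on instance `K`. -/
noncomputable def OFFcost (Q : QualityCost) (α : ℕ) (Off : Finset Job → Sched)
    (K : Finset Job) : ℝ≥0∞ :=
  cost Q α (Off K) K

/-- `S` is the schedule output by the algorithm TPE with offline algorithm `Off`,
online algorithm `On`, prediction `Jhat`, true instance `J` and confidence `lam`:
either `OFF(𝒥_{≤t}) ≤ λ·OFF(Ĵ)` for all times `t ≥ 0` and TPE outputs `On(𝒥)`,
or TPE switches at the first time `t_λ` with `OFF(𝒥_{≤t_λ}) > λ·OFF(Ĵ)` and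
outputs the combination of `OfflineAlg(Ĵ_{≥t_λ})` (for the correctly predicted
jobs `𝒥 ∩ Ĵ_{≥t_λ}`) and `OnlineAlg(𝒥 \ Ĵ_{≥t_λ})` (for all other jobs). -/
def TPEOutput (Q : QualityCost) (α : ℕ) (Off On : Finset Job → Sched)
    (Jhat J : Finset Job) (lam : ℝ) (S : Sched) : Prop :=
  ((∀ t : ℝ, 0 ≤ t →
      OFFcost Q α Off (restrictLE J t) ≤ ENNReal.ofReal lam * OFFcost Q α Off Jhat) ∧
    S = On J) ∨
  (∃ tl : ℝ, 0 ≤ tl ∧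
    ENNReal.ofReal lam * OFFcost Q α Off Jhat < OFFcost Q α Off (restrictLE J tl) ∧
    (∀ t : ℝ, 0 ≤ t →
      ENNReal.ofReal lam * OFFcost Q α Off Jhat < OFFcost Q α Off (restrictLE J t) → tl ≤ t) ∧
    S = fun j t =>
      if j ∈ J ∩ restrictGE Jhat tl then Off (restrictGE Jhat tl) j t
      else On (J \ restrictGE Jhat tl) j t)

-- Monotonicity of `x ↦ (x + v) ^ n - x ^ n`, with both sides moved so that no subtraction occurs.
theorem add_pow_add_pow_le {R : Type*} [CommSemiring R] [PartialOrder R] [IsOrderedRing R]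
    {u U v : R} (hu : 0 ≤ u) (hv : 0 ≤ v) (huU : u ≤ U) (n : ℕ) :
    (u + v) ^ n + U ^ n ≤ (U + v) ^ n + u ^ n := by
  simp only [add_pow, sum_range_succ, Nat.choose_self, Nat.sub_self, pow_zero, mul_one,
    Nat.cast_one]
  rw [add_right_comm, add_assoc, add_assoc]
  gcongr

-- The extra `z` on the left is what makes the induction go through.
theorem one_add_pow_add_le {R : Type*} [CommSemiring R] [PartialOrder R] [IsOrderedRing R]
    {z : R} (h0 : 0 ≤ z) (h1 : z ≤ 1) (n : ℕ) : (1 + z) ^ n + z ≤ 1 + 2 ^ n * z := by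
  induction n with
  | zero => simp
  | succ n ih =>
    have h2 : (1 + z) ^ n ≤ 2 ^ n :=
      pow_le_pow_left₀ (add_nonneg zero_le_one h0) (one_add_one_eq_two (R := R) ▸ by gcongr) n
    calc (1 + z) ^ (n + 1) + z = ((1 + z) ^ n + z) + (1 + z) ^ n * z := by ring
      _ ≤ (1 + 2 ^ n * z) + 2 ^ n * z := by gcongr
      _ = 1 + 2 ^ (n + 1) * z := by ring

namespace ENNReal

variable {n : ℕ}

theorem rpow_inv_add_pow_add_le (hn : n ≠ 0) {E F P : ℝ≥0∞} (h : E + F ≤ P)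
    (v : ℝ≥0∞) : (E ^ (n⁻¹ : ℝ) + v) ^ n + F ≤ (P ^ (n⁻¹ : ℝ) + v) ^ n := by
  rcases eq_or_ne E ⊤ with rfl | hE
  · obtain rfl : P = ⊤ := top_le_iff.1 (le_self_add.trans h)
    rw [top_rpow_of_pos (by positivity), top_add, top_pow hn]
    exact le_top
  refine ENNReal.le_of_add_le_add_right hE ?_
  calc (E ^ (n⁻¹ : ℝ) + v) ^ n + F + E = (E ^ (n⁻¹ : ℝ) + v) ^ n + (E + F) := by ring
    _ ≤ (E ^ (n⁻¹ : ℝ) + v) ^ n + (P ^ (n⁻¹ : ℝ)) ^ n := by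
        rw [rpow_inv_natCast_pow hn]; gcongr
    _ ≤ (P ^ (n⁻¹ : ℝ) + v) ^ n + (E ^ (n⁻¹ : ℝ)) ^ n :=
        add_pow_add_pow_le zero_le zero_le (by gcongr; exact le_of_add_le_left h) n
    _ = (P ^ (n⁻¹ : ℝ) + v) ^ n + E := by rw [rpow_inv_natCast_pow hn]

theorem rpow_inv_add_rpow_inv_pow_add_add_le (hn : n ≠ 0) {E F P E' F' P' : ℝ≥0∞}
    (h : E + F ≤ P) (h' : E' + F' ≤ P') :
    (E ^ (n⁻¹ : ℝ) + E' ^ (n⁻¹ : ℝ)) ^ n + F + F' ≤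
      (P ^ (n⁻¹ : ℝ) + P' ^ (n⁻¹ : ℝ)) ^ n :=
  calc _ ≤ (P ^ (n⁻¹ : ℝ) + E' ^ (n⁻¹ : ℝ)) ^ n + F' := by
        gcongr; exact rpow_inv_add_pow_add_le hn h _
    _ ≤ _ := by
        rw [add_comm (P ^ _), add_comm (P ^ _)]
        exact rpow_inv_add_pow_add_le hn h' _

theorem rpow_inv_add_mul_rpow_inv_pow (hn : n ≠ 0) (P c : ℝ≥0∞) :
    (P ^ (n⁻¹ : ℝ) + (c * P) ^ (n⁻¹ : ℝ)) ^ n = (1 + c ^ (n⁻¹ : ℝ)) ^ n * P := by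
  rw [mul_rpow_of_nonneg _ _ (by positivity), ← one_add_mul, mul_pow, rpow_inv_natCast_pow hn]

theorem one_add_mul_rpow_inv_pow_le (hn : n ≠ 0) {a b : ℝ≥0∞} (ha : 1 ≤ a)
    (hb : b ≤ 1) : (1 + (a * b) ^ (n⁻¹ : ℝ)) ^ n ≤ 1 + a * 2 ^ n * b ^ (n⁻¹ : ℝ) := by
  have hinv : (n⁻¹ : ℝ) ≤ 1 :=
    inv_le_one_of_one_le₀ (by exact_mod_cast Nat.one_le_iff_ne_zero.2 hn)
  rcases le_total ((a * b) ^ (n⁻¹ : ℝ)) 1 with hz | hz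
  · calc (1 + (a * b) ^ (n⁻¹ : ℝ)) ^ n ≤ 1 + 2 ^ n * (a * b) ^ (n⁻¹ : ℝ) :=
          le_self_add.trans (one_add_pow_add_le zero_le hz n)
      _ ≤ 1 + a * 2 ^ n * b ^ (n⁻¹ : ℝ) := by
          rw [mul_rpow_of_nonneg _ _ (by positivity), mul_left_comm, ← mul_assoc]
          gcongr
          simpa using rpow_le_rpow_of_exponent_le ha hinv
  · calc (1 + (a * b) ^ (n⁻¹ : ℝ)) ^ n ≤ (2 * (a * b) ^ (n⁻¹ : ℝ)) ^ n := by
          rw [two_mul]; gcongr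
      _ = 2 ^ n * (a * b) := by rw [mul_pow, rpow_inv_natCast_pow hn]
      _ ≤ 1 + a * 2 ^ n * b ^ (n⁻¹ : ℝ) := by
          refine le_add_left ?_
          rw [mul_left_comm, ← mul_assoc]
          gcongr
          simpa using rpow_le_rpow_of_exponent_ge hb hinv

end ENNReal

theorem Feasible.mono {J' J : Finset Job} {S : Sched} (hS : Feasible J S) (h : J' ⊆ J) :
    Feasible J' S :=
  fun j hj => hS j (h hj)

theorem ValidInstance.mono {J' J : Finset Job} (hJ : ValidInstance J) (h : J' ⊆ J) :
    ValidInstance J' :=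
  fun j hj => hJ j (h hj)

theorem QualityCost.F_congr (Q : QualityCost) {S S' : Sched} {J : Finset Job}
    (h : ∀ j ∈ J, S j = S' j) : Q.F S J = Q.F S' J :=
  Q.profile_congr S S' J fun j hj t => by rw [work, work, h j hj]

noncomputable def glue (A : Finset Job) (SA SB : Sched) : Sched :=
  fun j t => if j ∈ A then SA j t else SB j t

section Scheduling

variable {Q : QualityCost} {α : ℕ} {A B J J' K : Finset Job} {S SA SB : Sched}

theorem energy_eq_lintegral_rpow (hS : Feasible J S) :
    energy α J S = ∫⁻ t in Set.Ioi 0, ENNReal.ofReal (∑ j ∈ J, S j t) ^ (α : ℝ) := by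
  refine lintegral_congr fun t => ?_
  rw [ENNReal.rpow_natCast, ENNReal.ofReal_pow (sum_nonneg fun j hj => (hS j hj).2.1 t)]

theorem energy_mono (hS : Feasible J S) (h : J' ⊆ J) : energy α J' S ≤ energy α J S := by
  refine lintegral_mono fun t => ENNReal.ofReal_le_ofReal (pow_le_pow_left₀ ?_ ?_ α)
  · exact sum_nonneg fun j hj => (hS j (h hj)).2.1 t
  · exact sum_le_sum_of_subset_of_nonneg h fun j hj _ => (hS j hj).2.1 t

theorem cost_mono (hS : Feasible J S) (h : J' ⊆ J) : cost Q α S J' ≤ cost Q α S J :=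
  add_le_add (energy_mono hS h) (Q.mono_subset S J' J h)

theorem opt_le_cost (hS : Feasible J S) : OPT Q α J ≤ cost Q α S J :=
  iInf₂_le S hS

theorem opt_mono (h : J' ⊆ J) : OPT Q α J' ≤ OPT Q α J :=
  le_iInf₂ fun _ hS => (opt_le_cost (hS.mono h)).trans (cost_mono hS h)

theorem Monotone.map_opt {f : ℝ≥0∞ → ℝ≥0∞} (hm : Monotone f) (hf : Continuous f)
    (htop : f ⊤ = ⊤) :
    f (OPT Q α K) = ⨅ (S : Sched) (_ : Feasible K S), f (cost Q α S K) := by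
  rw [OPT, hm.map_iInf_of_continuousAt hf.continuousAt htop]
  exact iInf_congr fun S => hm.map_iInf_of_continuousAt hf.continuousAt htop

theorem glue_apply_of_mem {j : Job} (hj : j ∈ A) : glue A SA SB j = SA j :=
  funext fun _ => if_pos hj

theorem glue_apply_of_notMem {j : Job} (hj : j ∉ A) : glue A SA SB j = SB j :=
  funext fun _ => if_neg hj

theorem Feasible.glue (hA : Feasible A SA) (hB : Feasible B SB) :
    Feasible (A ∪ B) (glue A SA SB) := by
  intro j hj
  by_cases hjA : j ∈ A
  · rw [glue_apply_of_mem hjA]; exact hA j hjA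
  · rw [glue_apply_of_notMem hjA]; exact hB j ((mem_union.1 hj).resolve_left hjA)

theorem energy_glue_le (hα : 1 ≤ α) (hAB : Disjoint A B) (hA : Feasible A SA)
    (hB : Feasible B SB) :
    energy α (A ∪ B) (glue A SA SB) ≤
      (energy α A SA ^ (α⁻¹ : ℝ) + energy α B SB ^ (α⁻¹ : ℝ)) ^ α := by
  set f : ℝ → ℝ≥0∞ := fun t => ENNReal.ofReal (∑ j ∈ A, SA j t)
  set g : ℝ → ℝ≥0∞ := fun t => ENNReal.ofReal (∑ j ∈ B, SB j t)
  have hsum : ∀ t, ENNReal.ofReal (∑ j ∈ A ∪ B, glue A SA SB j t) = (f + g) t := fun t => by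
    rw [sum_union hAB, sum_congr rfl fun j hj => congrFun (glue_apply_of_mem hj) t,
      sum_congr rfl fun j hj => congrFun (glue_apply_of_notMem (disjoint_right.1 hAB hj)) t,
      ENNReal.ofReal_add (sum_nonneg fun j hj => (hA j hj).2.1 t)
        (sum_nonneg fun j hj => (hB j hj).2.1 t)]
    rfl
  have hminkowski := ENNReal.lintegral_Lp_add_le (μ := volume.restrict (Set.Ioi 0))
    (Finset.measurable_sum A fun j hj => (hA j hj).1).ennreal_ofReal.aemeasurable
    (Finset.measurable_sum B fun j hj => (hB j hj).1).ennreal_ofReal.aemeasurable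
    (Nat.one_le_cast.2 hα)
  rw [energy_eq_lintegral_rpow (hA.glue hB), energy_eq_lintegral_rpow hA,
    energy_eq_lintegral_rpow hB, ← ENNReal.rpow_natCast,
    ← ENNReal.rpow_inv_le_iff (by positivity)]
  simpa only [hsum, one_div] using hminkowski

theorem cost_glue_le (hα : 1 ≤ α) (hAB : Disjoint A B) (hA : Feasible A SA)
    (hB : Feasible B SB) :
    cost Q α (glue A SA SB) (A ∪ B) ≤
      (cost Q α SA A ^ (α⁻¹ : ℝ) + cost Q α SB B ^ (α⁻¹ : ℝ)) ^ α := by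
  have hF : Q.F (glue A SA SB) (A ∪ B) ≤ Q.F SA A + Q.F SB B := by
    refine (Q.subadd _ A B hAB).trans_eq ?_
    rw [Q.F_congr fun j => glue_apply_of_mem,
      Q.F_congr fun j hj => glue_apply_of_notMem (disjoint_right.1 hAB hj)]
  calc cost Q α (glue A SA SB) (A ∪ B)
      ≤ (energy α A SA ^ (α⁻¹ : ℝ) + energy α B SB ^ (α⁻¹ : ℝ)) ^ α
          + (Q.F SA A + Q.F SB B) :=
        add_le_add (energy_glue_le hα hAB hA hB) hF
    _ ≤ _ := by
        rw [← add_assoc]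
        exact ENNReal.rpow_inv_add_rpow_inv_pow_add_add_le (by omega) le_rfl le_rfl

theorem cost_glue_le_of_le (hα : 1 ≤ α) (hAB : Disjoint A B) (hA : Feasible A SA)
    (hB : Feasible B SB) {P c : ℝ≥0∞} (hPA : cost Q α SA A ≤ P)
    (hPB : cost Q α SB B ≤ c * P) :
    cost Q α (glue A SA SB) (A ∪ B) ≤ (1 + c ^ (α⁻¹ : ℝ)) ^ α * P :=
  calc cost Q α (glue A SA SB) (A ∪ B)
      ≤ (cost Q α SA A ^ (α⁻¹ : ℝ) + cost Q α SB B ^ (α⁻¹ : ℝ)) ^ α :=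
        cost_glue_le hα hAB hA hB
    _ ≤ (P ^ (α⁻¹ : ℝ) + (c * P) ^ (α⁻¹ : ℝ)) ^ α := by gcongr
    _ = (1 + c ^ (α⁻¹ : ℝ)) ^ α * P := ENNReal.rpow_inv_add_mul_rpow_inv_pow (by omega) P c

theorem opt_union_le (hα : 1 ≤ α) (hAB : Disjoint A B) :
    OPT Q α (A ∪ B) ≤ (OPT Q α A ^ (α⁻¹ : ℝ) + OPT Q α B ^ (α⁻¹ : ℝ)) ^ α := by
  have hmap : ∀ (K : Finset Job) (c : ℝ≥0∞), (OPT Q α K ^ (α⁻¹ : ℝ) + c) ^ α =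
      ⨅ (S : Sched) (_ : Feasible K S), (cost Q α S K ^ (α⁻¹ : ℝ) + c) ^ α := fun K c =>
    Monotone.map_opt (f := fun x => (x ^ (α⁻¹ : ℝ) + c) ^ α)
      (fun x y h => by beta_reduce; gcongr)
      ((ENNReal.continuous_pow α).comp (ENNReal.continuous_rpow_const.add continuous_const))
      (by simp [show 0 < α by omega, show α ≠ 0 by omega])
  rw [hmap]
  refine le_iInf₂ fun SA hA => ?_
  rw [add_comm, hmap]
  refine le_iInf₂ fun SB hB => ?_
  rw [add_comm]
  exact (opt_le_cost (hA.glue hB)).trans (cost_glue_le hα hAB hA hB)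

theorem opt_le_of_subset_union_of_opt_eq_zero (hα : 1 ≤ α) (hK : K ⊆ A ∪ B)
    (hB : OPT Q α B = 0) : OPT Q α K ≤ OPT Q α A := by
  have hBA : OPT Q α (B \ A) = 0 := nonpos_iff_eq_zero.1 (hB ▸ opt_mono sdiff_subset)
  calc OPT Q α K ≤ OPT Q α (A ∪ B \ A) := opt_mono (by rwa [union_sdiff_self_eq_union])
    _ ≤ (OPT Q α A ^ (α⁻¹ : ℝ) + OPT Q α (B \ A) ^ (α⁻¹ : ℝ)) ^ α :=
        opt_union_le hα disjoint_sdiff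
    _ = OPT Q α A := by
        rw [hBA, ENNReal.zero_rpow_of_pos (by positivity), add_zero,
          ENNReal.rpow_inv_natCast_pow (by omega)]

theorem opt_eq_of_opt_sdiff_eq_zero (hα : 1 ≤ α) (h : OPT Q α (J \ J') = 0)
    (h' : OPT Q α (J' \ J) = 0) : OPT Q α J = OPT Q α J' := by
  have hsub : ∀ K L : Finset Job, K ⊆ L ∪ K \ L := fun K L => by
    rw [union_sdiff_self_eq_union]; exact subset_union_right
  exact le_antisymm (opt_le_of_subset_union_of_opt_eq_zero hα (hsub J J') h)
    (opt_le_of_subset_union_of_opt_eq_zero hα (hsub J' J) h')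

theorem OfflineCompetitive.opt_le_offcost {γ : ℝ≥0∞} {Off : Finset Job → Sched}
    (hOff : OfflineCompetitive Q α γ Off) (hK : ValidInstance K) :
    OPT Q α K ≤ OFFcost Q α Off K :=
  (hOff K hK).2.1

theorem OfflineCompetitive.offcost_eq_opt {Off : Finset Job → Sched}
    (hOff : OfflineCompetitive Q α 1 Off) (hK : ValidInstance K) :
    OFFcost Q α Off K = OPT Q α K :=
  le_antisymm ((one_mul (OPT Q α K)) ▸ (hOff K hK).2.2) (hOff.opt_le_offcost hK)

theorem OnlineCompetitive.one_le {γ : ℝ≥0∞} {On : Finset Job → Sched}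
    (hOn : OnlineCompetitive Q α γ On) (hK : ValidInstance K) (hpos : 0 < OPT Q α K)
    (hfin : OPT Q α K < ⊤) : 1 ≤ γ := by
  refine (ENNReal.mul_le_mul_iff_left hpos.ne' hfin.ne).1 ?_
  rw [one_mul]
  exact (opt_le_cost (hOn K hK).1).trans (hOn K hK).2

end Scheduling

theorem exists_restrictLE_eq_self (J : Finset Job) : ∃ t, 0 ≤ t ∧ restrictLE J t = J := by
  obtain ⟨b, hb⟩ := (J.image Job.r).bddAbove
  exact ⟨max b 0, le_max_right _ _, filter_true_of_mem fun j hj =>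
    (hb (mem_coe.2 (mem_image_of_mem _ hj))).trans (le_max_left _ _)⟩

theorem exists_restrictLE_eq_filter_lt {J : Finset Job} (hJ : ValidInstance J) {t : ℝ}
    (h : (J.filter (·.r < t)).Nonempty) :
    ∃ s, 0 ≤ s ∧ s < t ∧ restrictLE J s = J.filter (·.r < t) := by
  obtain ⟨j, hj⟩ := h
  set s := (J.filter (·.r < t)).sup' ⟨j, hj⟩ Job.r
  have hst : s < t := (sup'_lt_iff _).2 fun i hi => (mem_filter.1 hi).2
  refine ⟨s, (hJ j (mem_filter.1 hj).1).1.trans (le_sup' Job.r hj), hst, ?_⟩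
  ext i
  simp only [restrictLE, mem_filter]
  exact ⟨fun ⟨hi, hle⟩ => ⟨hi, hle.trans_lt hst⟩,
    fun ⟨hi, hlt⟩ => ⟨hi, le_sup' Job.r (mem_filter.2 ⟨hi, hlt⟩)⟩⟩

section TPE

variable {Q : QualityCost} {α : ℕ} {Off : Finset Job → Sched} {Jhat J : Finset Job}

theorem exists_lt_offcost_restrictLE (hOff : OfflineCompetitive Q α 1 Off)
    (hJhat : ValidInstance Jhat) (hJ : ValidInstance J) (hopt : OPT Q α J = OPT Q α Jhat)
    (hpos : 0 < OPT Q α Jhat) (hfin : OPT Q α Jhat < ⊤) {lam : ℝ} (hlam : lam < 1) :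
    ∃ t, 0 ≤ t ∧
      ENNReal.ofReal lam * OFFcost Q α Off Jhat < OFFcost Q α Off (restrictLE J t) := by
  obtain ⟨t, ht0, ht⟩ := exists_restrictLE_eq_self J
  refine ⟨t, ht0, ?_⟩
  calc ENNReal.ofReal lam * OFFcost Q α Off Jhat = ENNReal.ofReal lam * OPT Q α Jhat := by
        rw [hOff.offcost_eq_opt hJhat]
    _ < 1 * OPT Q α Jhat :=
        ENNReal.mul_lt_mul_left hpos.ne' hfin.ne (ENNReal.ofReal_lt_one.2 hlam)
    _ = OPT Q α J := by rw [one_mul, hopt]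
    _ ≤ OFFcost Q α Off (restrictLE J t) := by rw [ht]; exact hOff.opt_le_offcost hJ

theorem opt_sdiff_restrictGE_le (hα : 1 ≤ α) {γ : ℝ≥0∞}
    (hOff : OfflineCompetitive Q α γ Off) (hJ : ValidInstance J)
    (hsdiff : OPT Q α (J \ Jhat) = 0) {c : ℝ≥0∞} {tl : ℝ}
    (hmin : ∀ t, 0 ≤ t → c < OFFcost Q α Off (restrictLE J t) → tl ≤ t) :
    OPT Q α (J \ restrictGE Jhat tl) ≤ c := by
  have hsub : J \ restrictGE Jhat tl ⊆ J.filter (·.r < tl) ∪ (J \ Jhat) := by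
    intro j
    simp only [restrictGE, mem_sdiff, mem_filter, mem_union, not_and, not_le]
    tauto
  rcases (J.filter (·.r < tl)).eq_empty_or_nonempty with hempty | hne
  · rw [hempty, empty_union] at hsub
    exact (opt_mono hsub).trans (hsdiff ▸ zero_le)
  obtain ⟨s, hs0, hstl, hs⟩ := exists_restrictLE_eq_filter_lt hJ hne
  calc OPT Q α (J \ restrictGE Jhat tl) ≤ OPT Q α (J.filter (·.r < tl)) :=
        opt_le_of_subset_union_of_opt_eq_zero hα hsub hsdiff
    _ ≤ OFFcost Q α Off (restrictLE J s) :=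
        hs ▸ hOff.opt_le_offcost (hJ.mono (filter_subset _ _))
    _ ≤ c := not_lt.1 fun h => (hmin s hs0 h).not_gt hstl

end TPE

theorem tpe_consistency_general (Q : QualityCost) (α : ℕ) (hα : 1 ≤ α)
    (γon : ℝ≥0∞) (Off On : Finset Job → Sched)
    (hOff : OfflineCompetitive Q α 1 Off) (hOn : OnlineCompetitive Q α γon On)
    (Jhat J : Finset Job) (hJhatV : ValidInstance Jhat) (hJV : ValidInstance J)
    (hpos : 0 < OPT Q α Jhat) (hfin : OPT Q α Jhat < ⊤)
    (lam : ℝ) (hlam1 : lam < 1)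
    (hη₁ : OPT Q α (J \ Jhat) / OPT Q α Jhat = 0)
    (hη₂ : OPT Q α (Jhat \ J) / OPT Q α Jhat = 0)
    (S : Sched) (hS : TPEOutput Q α Off On Jhat J lam S) :
    cost Q α S J ≤
      (1 + γon * 2 ^ α * ENNReal.ofReal lam ^ ((α : ℝ)⁻¹)) * OPT Q α J := by
  have hα0 : α ≠ 0 := by omega
  have hsdiff₁ := (ENNReal.div_eq_zero_iff.1 hη₁).resolve_right hfin.ne
  have hsdiff₂ := (ENNReal.div_eq_zero_iff.1 hη₂).resolve_right hfin.ne
  have hopt : OPT Q α J = OPT Q α Jhat := opt_eq_of_opt_sdiff_eq_zero hα hsdiff₁ hsdiff₂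
  rcases hS with ⟨hnever, -⟩ | ⟨tl, -, -, hmin, rfl⟩
  · obtain ⟨t, ht0, hlt⟩ := exists_lt_offcost_restrictLE hOff hJhatV hJV hopt hpos hfin hlam1
    exact absurd (hnever t ht0) hlt.not_ge
  set X := restrictGE Jhat tl
  have hX : ValidInstance X := hJhatV.mono (filter_subset _ _)
  have hJX : ValidInstance (J \ X) := hJV.mono sdiff_subset
  have hcostA : cost Q α (Off X) (J ∩ X) ≤ OPT Q α J :=
    calc cost Q α (Off X) (J ∩ X) ≤ OFFcost Q α Off X :=
          cost_mono (hOff X hX).1 inter_subset_right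
      _ = OPT Q α X := hOff.offcost_eq_opt hX
      _ ≤ OPT Q α J := hopt ▸ opt_mono (filter_subset _ _)
  have hcostB : cost Q α (On (J \ X)) (J \ X) ≤ γon * ENNReal.ofReal lam * OPT Q α J :=
    calc cost Q α (On (J \ X)) (J \ X) ≤ γon * OPT Q α (J \ X) := (hOn _ hJX).2
      _ ≤ γon * (ENNReal.ofReal lam * OFFcost Q α Off Jhat) := by
        gcongr; exact opt_sdiff_restrictGE_le hα hOff hJV hsdiff₁ hmin
      _ = γon * ENNReal.ofReal lam * OPT Q α J := by
        rw [hOff.offcost_eq_opt hJhatV, hopt, mul_assoc]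
  calc _ = cost Q α (glue (J ∩ X) (Off X) (On (J \ X))) (J ∩ X ∪ J \ X) := by
        rw [union_comm, sdiff_union_inter]; rfl
    _ ≤ (1 + (γon * ENNReal.ofReal lam) ^ (α⁻¹ : ℝ)) ^ α * OPT Q α J :=
        cost_glue_le_of_le hα (disjoint_sdiff_inter J X).symm
          ((hOff X hX).1.mono inter_subset_right) (hOn _ hJX).1 hcostA hcostB
    _ ≤ (1 + γon * 2 ^ α * ENNReal.ofReal lam ^ ((α : ℝ)⁻¹)) * OPT Q α J := by
        gcongr
        exact ENNReal.one_add_mul_rpow_inv_pow_le hα0 (hOn.one_le hJhatV hpos hfin)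
          (ENNReal.ofReal_le_one.2 hlam1.le)

/-- **Corollary 3.5 (consistency).** If the offline algorithm is optimal
(`γ_off = 1`) and the predictions are exactly correct (`η₁ = η₂ = 0`), then for
any `λ ∈ (0,1)` the schedule output by TPE satisfies
`cost(S,𝒥) ≤ (1 + γ_on·2^α·λ^{1/α})·OPT(𝒥)`. -/
theorem tpe_consistency (Q : QualityCost) (α : ℕ) (hα : 1 ≤ α)
    (γon : ℝ≥0∞) (Off On : Finset Job → Sched)
    (hOff : OfflineCompetitive Q α 1 Off) (hOn : OnlineCompetitive Q α γon On)
    (Jhat J : Finset Job) (hJhatV : ValidInstance Jhat) (hJV : ValidInstance J)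
    (hne : Jhat.Nonempty) (hpos : 0 < OPT Q α Jhat) (hfin : OPT Q α Jhat < ⊤)
    (lam : ℝ) (hlam0 : 0 < lam) (hlam1 : lam < 1)
    (hη₁ : OPT Q α (J \ Jhat) / OPT Q α Jhat = 0)
    (hη₂ : OPT Q α (Jhat \ J) / OPT Q α Jhat = 0)
    (S : Sched) (hS : TPEOutput Q α Off On Jhat J lam S) :
    cost Q α S J ≤
      (1 + γon * 2 ^ α * ENNReal.ofReal lam ^ ((α : ℝ)⁻¹)) * OPT Q α J :=
  tpe_consistency_general Q α hα γon Off On hOff hOn Jhat J hJhatV hJV hpos hfin lam hlam1 hη₁ hη₂ S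
    hS
end

section
/- Fix an integer α ≥ 1 and a positive integer D, and consider the energy minimization with uniform deadlines objective. Let w_i^{real} and w_i^{pred} (i ∈ ℕ, finitely many nonzero) be nonnegative integers, let 𝒥 (resp. Ĵ) be the instance consisting, for each i, of w_i^{real} (resp. w_i^{pred}) unit-work jobs released at time i with deadline i + D, let 𝒥 \ Ĵ be the instance with max(w_i^{real} − w_i^{pred}, 0) unit-work jobs released at time i with deadline i + D, and symmetrically for Ĵ \ 𝒥. Then max{ OPT(𝒥 \ Ĵ), OPT(Ĵ \ 𝒥) } ≤ D·Σ_i |w_i^{real} − w_i^{pred}|^α. -/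
/-!
Running every unit job at speed one during the first unit of its window is feasible because
`D ≥ 1`, and at time `t ≥ 0` the speed is the number `w ⌊t⌋₊` of jobs released at `⌊t⌋₊`.
Its energy is therefore `Σ_i w_i^α`, and for either difference instance `w_i` is at most
`|w_i^{real} − w_i^{pred}|`.
-/

open MeasureTheory Finset
open scoped ENNReal BigOperators Classical

structure JobD where
  id : ℕ
  r : ℝ
  p : ℝ
  d : ℝ

noncomputable instance : DecidableEq JobD := Classical.decEq _

abbrev SchedD := JobD → ℝ → ℝ

def FeasibleD (K : Finset JobD) (S : SchedD) : Prop :=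
  ∀ j ∈ K, Measurable (S j) ∧ (∀ t, 0 ≤ S j t) ∧
    (∀ t, t < j.r ∨ j.d < t → S j t = 0) ∧
    (∫ t in Set.Icc j.r j.d, S j t) = j.p

noncomputable def energyD (α : ℕ) (K : Finset JobD) (S : SchedD) : ℝ≥0∞ :=
  ∫⁻ t in Set.Ioi (0 : ℝ), ENNReal.ofReal ((∑ j ∈ K, S j t) ^ α)

noncomputable def OPTD (α : ℕ) (K : Finset JobD) : ℝ≥0∞ :=
  ⨅ (S : SchedD) (_ : FeasibleD K S), energyD α K S

def UniformWorkload (D : ℕ) (w : ℕ → ℕ) (K : Finset JobD) : Prop :=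
  (∀ j ∈ K, ∃ i : ℕ, j.r = (i : ℝ) ∧ j.d = (i : ℝ) + (D : ℝ) ∧ j.p = 1) ∧
  (∀ i : ℕ, (K.filter fun j => j.r = (i : ℝ)).card = w i)

noncomputable def greedySched : SchedD := fun j => (Set.Ico j.r (j.r + 1)).indicator 1

lemma feasibleD_greedySched {K : Finset JobD} (hK : ∀ j ∈ K, j.p = 1 ∧ j.r + 1 ≤ j.d) :
    FeasibleD K greedySched := by
  intro j hj
  obtain ⟨hp, hfit⟩ := hK j hj
  have hsub : Set.Ico j.r (j.r + 1) ⊆ Set.Icc j.r j.d := fun t ht => ⟨ht.1, by linarith [ht.2]⟩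
  refine ⟨measurable_const.indicator measurableSet_Ico,
    fun t => Set.indicator_nonneg (fun _ _ => zero_le_one) t, fun t ht => ?_, ?_⟩
  · refine Set.indicator_of_notMem (fun hmem => ?_) _
    rcases ht with ht | ht
    · linarith [hmem.1]
    · linarith [hmem.2]
  · rw [greedySched, setIntegral_indicator measurableSet_Ico,
      Set.inter_eq_self_of_subset_right hsub]
    simp [hp]

lemma UniformWorkload.feasibleD_greedySched {D : ℕ} (hD : 0 < D) {w : ℕ → ℕ} {K : Finset JobD}
    (hK : UniformWorkload D w K) : FeasibleD K greedySched := by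
  refine _root_.feasibleD_greedySched fun j hj => ?_
  obtain ⟨i, hr, hd, hp⟩ := hK.1 j hj
  have hD1 : (1 : ℝ) ≤ D := by exact_mod_cast hD
  exact ⟨hp, by linarith⟩

lemma UniformWorkload.sum_greedySched {D : ℕ} {w : ℕ → ℕ} {K : Finset JobD}
    (hK : UniformWorkload D w K) {t : ℝ} (ht : 0 ≤ t) :
    ∑ j ∈ K, greedySched j t = w ⌊t⌋₊ := by
  have hrun : ∀ j ∈ K, greedySched j t = if j.r = (⌊t⌋₊ : ℝ) then 1 else 0 := by
    intro j hj
    obtain ⟨i, hr, -, -⟩ := hK.1 j hj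
    have hmem : t ∈ Set.Ico j.r (j.r + 1) ↔ j.r = (⌊t⌋₊ : ℝ) := by
      rw [hr, Set.mem_Ico, ← Nat.floor_eq_iff ht, eq_comm, Nat.cast_inj]
    simp only [greedySched, Set.indicator_apply, hmem, Pi.one_apply]
  rw [Finset.sum_congr rfl hrun, Finset.sum_boole, hK.2]

lemma setLIntegral_Ioi_comp_natFloor_le (f : ℕ → ℝ≥0∞) :
    ∫⁻ t in Set.Ioi (0 : ℝ), f ⌊t⌋₊ ≤ ∑' i, f i := by
  set piece : ℕ → ℝ → ℝ≥0∞ := fun i => (Set.Ico (i : ℝ) (i + 1)).indicator fun _ => f i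
  have hpieces : ∀ t : ℝ, 0 ≤ t → f ⌊t⌋₊ = ∑' i, piece i t := by
    intro t ht
    have hmem : ∀ i : ℕ, t ∈ Set.Ico (i : ℝ) (i + 1) ↔ ⌊t⌋₊ = i := fun i =>
      (Nat.floor_eq_iff ht).symm
    rw [tsum_eq_single ⌊t⌋₊ fun i hi => Set.indicator_of_notMem
      (fun h => hi ((hmem i).1 h).symm) _]
    exact (Set.indicator_of_mem ((hmem _).2 rfl) (fun _ => f ⌊t⌋₊)).symm
  calc ∫⁻ t in Set.Ioi (0 : ℝ), f ⌊t⌋₊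
      = ∫⁻ t in Set.Ioi (0 : ℝ), ∑' i, piece i t :=
        setLIntegral_congr_fun measurableSet_Ioi fun t ht => hpieces t ht.le
    _ ≤ ∫⁻ t, ∑' i, piece i t := setLIntegral_le_lintegral _ _
    _ = ∑' i, f i := by
        rw [lintegral_tsum fun i => (measurable_const.indicator measurableSet_Ico).aemeasurable]
        congr 1 with i
        simp [lintegral_indicator measurableSet_Ico]

lemma UniformWorkload.OPTD_le_tsum (α : ℕ) {D : ℕ} (hD : 0 < D) {w : ℕ → ℕ} {K : Finset JobD}
    (hK : UniformWorkload D w K) :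
    OPTD α K ≤ ∑' i, ENNReal.ofReal ((w i : ℝ) ^ α) :=
  calc OPTD α K ≤ energyD α K greedySched := iInf₂_le _ (hK.feasibleD_greedySched hD)
    _ = ∫⁻ t in Set.Ioi (0 : ℝ), ENNReal.ofReal ((w ⌊t⌋₊ : ℝ) ^ α) :=
        setLIntegral_congr_fun measurableSet_Ioi fun t ht => by
          rw [hK.sum_greedySched ht.le]
    _ ≤ _ := setLIntegral_Ioi_comp_natFloor_le _

lemma UniformWorkload.OPTD_le_of_le {α D : ℕ} (hD : 0 < D) {w : ℕ → ℕ} {K : Finset JobD}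
    (hK : UniformWorkload D w K) {e : ℕ → ℝ} (hwe : ∀ i, (w i : ℝ) ≤ e i)
    (he : Summable fun i => e i ^ α) :
    OPTD α K ≤ ENNReal.ofReal (D * ∑' i, e i ^ α) := by
  have he0 : ∀ i, 0 ≤ e i ^ α := fun i => pow_nonneg ((Nat.cast_nonneg _).trans (hwe i)) α
  have hD1 : (1 : ℝ) ≤ D := by exact_mod_cast hD
  calc OPTD α K ≤ ∑' i, ENNReal.ofReal ((w i : ℝ) ^ α) := hK.OPTD_le_tsum α hD
    _ ≤ ∑' i, ENNReal.ofReal (e i ^ α) :=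
        ENNReal.tsum_le_tsum fun i =>
          ENNReal.ofReal_le_ofReal (pow_le_pow_left₀ (Nat.cast_nonneg _) (hwe i) α)
    _ = ENNReal.ofReal (∑' i, e i ^ α) := (ENNReal.ofReal_tsum_of_nonneg he0 he).symm
    _ ≤ ENNReal.ofReal (D * ∑' i, e i ^ α) :=
        ENNReal.ofReal_le_ofReal (le_mul_of_one_le_left (tsum_nonneg he0) hD1)

lemma Nat.cast_sub_le_abs_sub (a b : ℕ) : ((a - b : ℕ) : ℝ) ≤ |(a : ℝ) - b| := by
  rcases le_total b a with h | h
  · rw [Nat.cast_sub h]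
    exact le_abs_self _
  · rw [Nat.sub_eq_zero_of_le h, Nat.cast_zero]
    exact abs_nonneg _

theorem deadline_error_comparison_general (α : ℕ) (hα : 1 ≤ α) (D : ℕ) (hD : 0 < D)
    (wreal wpred : ℕ → ℕ) (N : ℕ) (hsupp : ∀ i, N ≤ i → wreal i = 0 ∧ wpred i = 0)
    (Jminus Jplus : Finset JobD)
    (hJminus : UniformWorkload D (fun i => wreal i - wpred i) Jminus)
    (hJplus : UniformWorkload D (fun i => wpred i - wreal i) Jplus) :
    max (OPTD α Jminus) (OPTD α Jplus) ≤
      ENNReal.ofReal ((D : ℝ) * ∑' i : ℕ, |(wreal i : ℝ) - (wpred i : ℝ)| ^ α) := by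
  have hsummable : Summable fun i => |(wreal i : ℝ) - (wpred i : ℝ)| ^ α := by
    refine summable_of_ne_finset_zero (s := Finset.range N) fun i hi => ?_
    obtain ⟨hreal, hpred⟩ := hsupp i (by simpa using hi)
    simp [hreal, hpred, zero_pow (by omega : α ≠ 0)]
  refine max_le (hJminus.OPTD_le_of_le hD (fun i => Nat.cast_sub_le_abs_sub _ _) hsummable)
    (hJplus.OPTD_le_of_le hD (fun i => ?_) hsummable)
  rw [abs_sub_comm]
  exact Nat.cast_sub_le_abs_sub _ _

/-- **Lemma D.1 of Appendix D (comparison with the error of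
Bamas et al.).** For uniform deadlines, writing `𝒥 \ Ĵ` and `Ĵ \ 𝒥` for the
instances consisting of the extra and the missing unit jobs at each time step,
`max{OPT(𝒥 \ Ĵ), OPT(Ĵ \ 𝒥)} ≤ D·Σ_i |w_i^{real} − w_i^{pred}|^α`. -/
theorem deadline_error_comparison (α : ℕ) (hα : 1 ≤ α) (D : ℕ) (hD : 0 < D)
    (wreal wpred : ℕ → ℕ) (N : ℕ) (hsupp : ∀ i, N ≤ i → wreal i = 0 ∧ wpred i = 0)
    (J Jhat Jminus Jplus : Finset JobD)
    (hJ : UniformWorkload D wreal J)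
    (hJhat : UniformWorkload D wpred Jhat)
    (hJminus : UniformWorkload D (fun i => wreal i - wpred i) Jminus)
    (hJplus : UniformWorkload D (fun i => wpred i - wreal i) Jplus) :
    max (OPTD α Jminus) (OPTD α Jplus) ≤
      ENNReal.ofReal ((D : ℝ) * ∑' i : ℕ, |(wreal i : ℝ) - (wpred i : ℝ)| ^ α) :=
  deadline_error_comparison_general α hα D hD wreal wpred N hsupp Jminus Jplus hJminus hJplus
end
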